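/- For every integer n and every real γ: if n ≥ 4 and 0 < γ ≤ 1/2, then Ξ(n,γ) < ((n+2γ)/(n−2γ)) · Q(n,γ); if n ≥ 5 and 0 < γ ≤ 1, then Ξ(n,γ) < ((n+2γ)/(n−2γ)) · Q(n,γ); and if n ≥ 7 and 0 < γ ≤ 2, then Ξ(n,γ) < ((n+2γ)/(n−2γ)) · Q(n,γ). -/

import Mathlib

/-!
With `x = n/4 + γ/2` and `y = n/4 - γ/2` the inequality reads `y R(y) < x R(x)` for
`R(t) = Γ(t) Γ(t - 1/2) / Γ(t - 1/4)²`. By Euler's limit formula,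
`Γ(t) Γ(t + 1/2) / (Γ(t - 1/4) Γ(t + 3/4)) = (t - 1/2)/(t - 1/4) · R(t)` is the limit of
`∏ⱼ (t + j - 1/4)(t + j + 3/4) / ((t + j)(t + j + 1/2))`, whose factors
`1 - (3/16) / (a (a + 1/2))`, `a = t + j`, increase with `t`. The remaining rational inequality holds as soon as
`(x - 1/2)(y - 1/2) > 1/8`, i.e. `(n - 2)² > 2 + 4γ²`, which is the case in all three ranges.
-/

open Real Filter Finset Set Topology

/-- `Ξ(n,γ) = 4^γ · Γ(n/4+γ/2−1/4)² / Γ(n/4−γ/2−1/4)²`. -/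
noncomputable def Xi (n : ℤ) (γ : ℝ) : ℝ :=
  (4 : ℝ) ^ γ * Real.Gamma ((n : ℝ) / 4 + γ / 2 - 1 / 4) ^ 2 /
    Real.Gamma ((n : ℝ) / 4 - γ / 2 - 1 / 4) ^ 2

/-- The fractional curvature `Q_γ(n,1)` of the trivial solution on `Sⁿ∖S¹`. -/
noncomputable def Qcurv (n : ℤ) (γ : ℝ) : ℝ :=
  (4 : ℝ) ^ γ * Real.Gamma (((n : ℝ) + 2 * γ) / 4) * Real.Gamma (((n : ℝ) - 2 + 2 * γ) / 4) /
    (Real.Gamma (((n : ℝ) - 2 * γ) / 4) * Real.Gamma (((n : ℝ) - 2 - 2 * γ) / 4))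

namespace Real

theorem GammaSeq_mul_GammaSeq_div (t p q : ℝ) {n : ℕ} (hn : n ≠ 0) :
    GammaSeq t n * GammaSeq (t + p) n / (GammaSeq (t - q) n * GammaSeq (t + p + q) n) =
      ∏ j ∈ range (n + 1), (t - q + j) * (t + p + q + j) / ((t + j) * (t + p + j)) := by
  have hn₀ : (0 : ℝ) < n := by exact_mod_cast Nat.pos_of_ne_zero hn
  have hpow : (n : ℝ) ^ (t - q) * (n : ℝ) ^ (t + p + q) = (n : ℝ) ^ t * (n : ℝ) ^ (t + p) := by
    rw [← rpow_add hn₀, ← rpow_add hn₀]; ring_nf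
  have hne : (n : ℝ) ^ t * (n : ℝ) ^ (t + p) * ((n.factorial : ℝ) * n.factorial) ≠ 0 := by
    positivity
  simp only [GammaSeq, prod_div_distrib, prod_mul_distrib]
  rw [div_mul_div_comm, div_mul_div_comm, mul_mul_mul_comm ((n : ℝ) ^ (t - q)), hpow,
    mul_mul_mul_comm ((n : ℝ) ^ t), div_div_div_cancel_left' _ _ hne]

theorem monotoneOn_sub_mul_add_div_mul_add {p q : ℝ} (hp : 0 ≤ p) (hq : 0 ≤ q) :
    MonotoneOn (fun a ↦ (a - q) * (a + p + q) / (a * (a + p))) (Ioi q) := by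
  intro a (ha : q < a) b (hb : q < b) hab
  have hu : a * (a + p) ≤ b * (b + p) := by apply mul_le_mul <;> linarith
  dsimp only
  rw [div_le_div_iff₀ (by nlinarith) (by nlinarith)]
  nlinarith [mul_le_mul_of_nonneg_left hu (mul_nonneg hq (add_nonneg hp hq))]

theorem Gamma_mul_Gamma_div_monotoneOn {p q : ℝ} (hp : 0 ≤ p) (hq : 0 ≤ q) :
    MonotoneOn (fun t ↦ Gamma t * Gamma (t + p) / (Gamma (t - q) * Gamma (t + p + q))) (Ioi q) := by
  have hlim : ∀ t, q < t → Tendsto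
      (fun n : ℕ ↦ ∏ j ∈ range (n + 1), (t - q + j) * (t + p + q + j) / ((t + j) * (t + p + j)))
      atTop (𝓝 (Gamma t * Gamma (t + p) / (Gamma (t - q) * Gamma (t + p + q)))) := by
    intro t ht
    have hΓ : Gamma (t - q) * Gamma (t + p + q) ≠ 0 :=
      (mul_pos (Gamma_pos_of_pos (by linarith)) (Gamma_pos_of_pos (by linarith))).ne'
    refine (((GammaSeq_tendsto_Gamma t).mul (GammaSeq_tendsto_Gamma (t + p))).div
      ((GammaSeq_tendsto_Gamma (t - q)).mul (GammaSeq_tendsto_Gamma (t + p + q))) hΓ).congr' ?_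
    filter_upwards [eventually_ne_atTop 0] with n hn
    exact GammaSeq_mul_GammaSeq_div t p q hn
  intro s (hs : q < s) t (ht : q < t) hst
  refine le_of_tendsto_of_tendsto' (hlim s hs) (hlim t ht) fun n ↦ prod_le_prod (fun j _ ↦ ?_)
    fun j _ ↦ ?_
  · have hj : (0 : ℝ) ≤ j := Nat.cast_nonneg j
    apply div_nonneg <;> apply mul_nonneg <;> linarith
  · have hj : (0 : ℝ) ≤ j := Nat.cast_nonneg j
    simpa only [sub_add_eq_add_sub, add_right_comm _ _ (j : ℝ)] using
      monotoneOn_sub_mul_add_div_mul_add hp hq (show q < s + j by linarith)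
        (show q < t + j by linarith) (by linarith : s + j ≤ t + j)

theorem Gamma_mul_Gamma_add_half_div (t : ℝ) (ht : 1 / 2 < t) :
    Gamma t * Gamma (t + 1 / 2) / (Gamma (t - 1 / 4) * Gamma (t + 1 / 2 + 1 / 4)) =
      (t - 1 / 2) / (t - 1 / 4) * (Gamma t * Gamma (t - 1 / 2) / Gamma (t - 1 / 4) ^ 2) := by
  have hΓ : Gamma (t - 1 / 4) ≠ 0 := (Gamma_pos_of_pos (by linarith)).ne'
  rw [show t + 1 / 2 = t - 1 / 2 + 1 by ring, show t - 1 / 2 + 1 + 1 / 4 = t - 1 / 4 + 1 by ring,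
    Gamma_add_one (by linarith), Gamma_add_one (by linarith)]
  field_simp

theorem mul_Gamma_mul_Gamma_div_sq_lt {x y : ℝ} (hy : 1 / 2 < y) (hyx : y < x)
    (h : 1 / 8 < (x - 1 / 2) * (y - 1 / 2)) :
    y * (Gamma y * Gamma (y - 1 / 2) / Gamma (y - 1 / 4) ^ 2) <
      x * (Gamma x * Gamma (x - 1 / 2) / Gamma (x - 1 / 4) ^ 2) := by
  have hx : 1 / 2 < x := hy.trans hyx
  have hmono := Gamma_mul_Gamma_div_monotoneOn (p := 1 / 2) (q := 1 / 4) (by norm_num) (by norm_num)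
    (show 1 / 4 < y by linarith) (show 1 / 4 < x by linarith) hyx.le
  dsimp only at hmono
  rw [Gamma_mul_Gamma_add_half_div y hy, Gamma_mul_Gamma_add_half_div x hx] at hmono
  set Ry := Gamma y * Gamma (y - 1 / 2) / Gamma (y - 1 / 4) ^ 2
  set Rx := Gamma x * Gamma (x - 1 / 2) / Gamma (x - 1 / 4) ^ 2
  have hRx : 0 < Rx := by
    have := Gamma_pos_of_pos (show 0 < x by linarith)
    have := Gamma_pos_of_pos (show 0 < x - 1 / 2 by linarith)
    have := Gamma_pos_of_pos (show 0 < x - 1 / 4 by linarith)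
    positivity
  -- the difference of the two sides is `(x - y) * ((x - 1/2) * (y - 1/2) - 1/8)`
  have hpoly : y * (y - 1 / 4) * (x - 1 / 2) < x * ((y - 1 / 2) * (x - 1 / 4)) := by
    nlinarith [mul_pos (sub_pos.2 hyx) (sub_pos.2 h)]
  have hy₂ : y * 2 - 1 ≠ 0 := by linarith
  have hy₄ : y * 4 - 1 ≠ 0 := by linarith
  clear_value Ry Rx
  calc y * Ry = y * (y - 1 / 4) / (y - 1 / 2) * ((y - 1 / 2) / (y - 1 / 4) * Ry) := by
        field_simp
    _ ≤ y * (y - 1 / 4) / (y - 1 / 2) * ((x - 1 / 2) / (x - 1 / 4) * Rx) := by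
        gcongr
        apply div_nonneg <;> nlinarith
    _ < x * Rx := by
        rw [← mul_assoc, div_mul_div_comm]
        gcongr
        rw [div_lt_iff₀ (by nlinarith)]
        exact hpoly

end Real

theorem Xi_lt_mul_Qcurv {n : ℤ} {γ : ℝ} (hγ : 0 < γ) (hn : 2 * γ < n - 2)
    (h : 2 + 4 * γ ^ 2 < (n - 2) ^ 2) :
    Xi n γ < (((n : ℝ) + 2 * γ) / ((n : ℝ) - 2 * γ)) * Qcurv n γ := by
  set x : ℝ := n / 4 + γ / 2 with hx
  set y : ℝ := n / 4 - γ / 2 with hy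
  have hXi : Xi n γ = 4 ^ γ * Gamma (x - 1 / 4) ^ 2 / Gamma (y - 1 / 4) ^ 2 := rfl
  have hQ : Qcurv n γ = 4 ^ γ * Gamma x * Gamma (x - 1 / 2) / (Gamma y * Gamma (y - 1 / 2)) := by
    unfold Qcurv
    rw [show ((n : ℝ) + 2 * γ) / 4 = x by ring, show ((n : ℝ) - 2 + 2 * γ) / 4 = x - 1 / 2 by ring,
      show ((n : ℝ) - 2 * γ) / 4 = y by ring, show ((n : ℝ) - 2 - 2 * γ) / 4 = y - 1 / 2 by ring]
  have hratio : ((n : ℝ) + 2 * γ) / ((n : ℝ) - 2 * γ) = x / y := by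
    rw [div_eq_div_iff (by linarith) (by linarith)]
    ring
  have key := mul_Gamma_mul_Gamma_div_sq_lt (x := x) (y := y) (by linarith) (by linarith)
    (by nlinarith)
  have hy₀ : 0 < y := by linarith
  have h₁ := Gamma_pos_of_pos (show 0 < x - 1 / 4 by linarith)
  have h₂ := Gamma_pos_of_pos (show 0 < y - 1 / 4 by linarith)
  have h₃ := Gamma_pos_of_pos hy₀
  have h₄ := Gamma_pos_of_pos (show 0 < y - 1 / 2 by linarith)
  have h₅ : (0 : ℝ) < 4 ^ γ := by positivity
  rw [hXi, hQ, hratio]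
  clear_value x y
  generalize Gamma (x - 1 / 4) = A at *
  generalize Gamma (y - 1 / 4) = B at *
  generalize Gamma y = E at *
  generalize Gamma (y - 1 / 2) = F at *
  calc 4 ^ γ * A ^ 2 / B ^ 2 = 4 ^ γ * (y * (E * F / B ^ 2)) * (A ^ 2 / (y * (E * F))) := by
        field_simp
    _ < 4 ^ γ * (x * (Gamma x * Gamma (x - 1 / 2) / A ^ 2)) * (A ^ 2 / (y * (E * F))) := by
        gcongr
    _ = x / y * (4 ^ γ * Gamma x * Gamma (x - 1 / 2) / (E * F)) := by
        field_simp

theorem stmt17 (n : ℤ) (γ : ℝ) :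
    (4 ≤ n → 0 < γ → γ ≤ 1 / 2 →
      Xi n γ < (((n : ℝ) + 2 * γ) / ((n : ℝ) - 2 * γ)) * Qcurv n γ) ∧
    (5 ≤ n → 0 < γ → γ ≤ 1 →
      Xi n γ < (((n : ℝ) + 2 * γ) / ((n : ℝ) - 2 * γ)) * Qcurv n γ) ∧
    (7 ≤ n → 0 < γ → γ ≤ 2 →
      Xi n γ < (((n : ℝ) + 2 * γ) / ((n : ℝ) - 2 * γ)) * Qcurv n γ) := by
  refine ⟨fun hn hγ hγ' ↦ ?_, fun hn hγ hγ' ↦ ?_, fun hn hγ hγ' ↦ ?_⟩ <;>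
  · have hn' := (Int.cast_le (R := ℝ)).2 hn
    push_cast at hn'
    exact Xi_lt_mul_Qcurv hγ (by linarith) (by nlinarith)
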